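/- Let p be an odd prime, 1 ≤ b ≤ a, and G = ⟨x, y ∣ x^(p^a) = y^(p^a) = z^(p^b) = [x,z] = [y,z] = 1, z := [x,y]⟩. If x₁ = x^i y^j z^k and y₁ = x^r y^s z^t with is − jr ≢ 0 (mod p), then the pair (x₁, y₁) generates G, the commutator [x₁, y₁] equals z^(is−jr) and has order p^b, and x₁ and y₁ each have order p^a. -/

import Mathlib

/-!
Writing elements as `x^a y^b z^c` makes `G` a quotient of the Heisenberg group on `ℤ³`, where
`[x^i y^j z^k, x^r y^s z^t] = z^(is - jr)` and `(x^i y^j z^k)^n = x^(in) y^(jn) z^(kn - ij·C(n,2))`.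
As `p^a` is odd it divides `C(p^a, 2)`, so `x₁^(p^a) = y₁^(p^a) = 1`. The lower bounds on the
orders come from the characters `G → ZMod (p^a)`, `x ↦ u`, `y ↦ v`, which for `(u, v) = (s, -r)`,
resp. `(-j, i)`, send `x₁`, resp. `y₁`, to `is - jr`, and from the map onto the Heisenberg group
over `ZMod (p^b)`, in which `z` has order exactly `p^b`. Since `is - jr` is a unit modulo `p^a`,
`⟨x₁, y₁⟩` contains `z^(is - jr)`, hence `z`, and by Bezout also `x` and `y`.
-/

open Multiplicative

lemma Nat.dvd_choose_two_of_odd {n : ℕ} (hn : Odd n) : n ∣ n.choose 2 := by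
  obtain ⟨k, rfl⟩ := hn
  refine ⟨k, ?_⟩
  rw [Nat.choose_two_right, Nat.add_sub_cancel, mul_left_comm, Nat.mul_div_cancel_left _ two_pos]

lemma ZMod.addOrderOf_intCast_of_isCoprime {n : ℕ} {d : ℤ} (h : IsCoprime (n : ℤ) d) :
    addOrderOf (d : ZMod n) = n := by
  refine Nat.dvd_antisymm (addOrderOf_dvd_of_nsmul_eq_zero (by simp)) ?_
  have hzero : ((addOrderOf (d : ZMod n) * d : ℤ) : ZMod n) = 0 := by
    push_cast
    rw [← nsmul_eq_mul, addOrderOf_nsmul_eq_zero]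
  exact Int.natCast_dvd_natCast.1
    (h.dvd_of_dvd_mul_right ((ZMod.intCast_zmod_eq_zero_iff_dvd _ _).1 hzero))

lemma orderOf_eq_of_orderOf_map_eq {G H : Type*} [Monoid G] [Monoid H] (f : G →* H) {g : G}
    {n : ℕ} (hg : g ^ n = 1) (hf : orderOf (f g) = n) : orderOf g = n :=
  Nat.dvd_antisymm (orderOf_dvd_of_pow_eq_one hg) (hf ▸ orderOf_map_dvd f g)

section GroupLemmas

variable {G : Type*} [Group G]

lemma inv_mul_inv_mul_mul_eq_one_iff {a b : G} : a⁻¹ * b⁻¹ * a * b = 1 ↔ Commute a b := by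
  rw [← Commute.inv_inv_iff, ← commutatorElement_eq_one_iff_commute, commutatorElement_def,
    inv_inv, inv_inv]

lemma zpow_eq_one_of_pow_eq_one_of_dvd {g : G} {n : ℕ} {k : ℤ} (hg : g ^ n = 1)
    (hk : (n : ℤ) ∣ k) : g ^ k = 1 :=
  orderOf_dvd_iff_zpow_eq_one.1
    ((Int.natCast_dvd_natCast.2 (orderOf_dvd_of_pow_eq_one hg)).trans hk)

lemma zpow_add_mul_eq_of_pow_eq_one {g : G} {n : ℕ} (hg : g ^ n = 1) (k l : ℤ) :
    g ^ (k + l * n) = g ^ k := by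
  rw [zpow_add, zpow_eq_one_of_pow_eq_one_of_dvd hg (dvd_mul_left _ _), mul_one]

lemma Subgroup.mem_of_zpow_mem_of_isCoprime {H : Subgroup G} {g : G} {n : ℕ} {d : ℤ}
    (hg : g ^ n = 1) (hd : IsCoprime (n : ℤ) d) (hgd : g ^ d ∈ H) : g ∈ H := by
  obtain ⟨u, v, huv⟩ := hd
  have hg' : g = (g ^ d) ^ v := by
    rw [← zpow_mul, ← zpow_add_mul_eq_of_pow_eq_one hg _ u, mul_comm d, add_comm, huv, zpow_one]
  exact hg' ▸ H.zpow_mem hgd v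

end GroupLemmas

/-- `⟨a, b, c⟩` stands for `x^a y^b z^c` with `z = x⁻¹ y⁻¹ x y` central, which dictates the
multiplication `y^b x^a' = x^a' y^b z^(-a'b)`. -/
@[ext]
structure Heisenberg (R : Type*) where
  a : R
  b : R
  c : R

namespace Heisenberg

variable {R : Type*} [CommRing R]

instance : Mul (Heisenberg R) := ⟨fun A B => ⟨A.a + B.a, A.b + B.b, A.c + B.c - A.b * B.a⟩⟩
instance : One (Heisenberg R) := ⟨⟨0, 0, 0⟩⟩
instance : Inv (Heisenberg R) := ⟨fun A => ⟨-A.a, -A.b, -A.c - A.a * A.b⟩⟩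

@[simp] lemma mul_a (A B : Heisenberg R) : (A * B).a = A.a + B.a := rfl
@[simp] lemma mul_b (A B : Heisenberg R) : (A * B).b = A.b + B.b := rfl
@[simp] lemma mul_c (A B : Heisenberg R) : (A * B).c = A.c + B.c - A.b * B.a := rfl
@[simp] lemma one_a : (1 : Heisenberg R).a = 0 := rfl
@[simp] lemma one_b : (1 : Heisenberg R).b = 0 := rfl
@[simp] lemma one_c : (1 : Heisenberg R).c = 0 := rfl
@[simp] lemma inv_a (A : Heisenberg R) : A⁻¹.a = -A.a := rfl
@[simp] lemma inv_b (A : Heisenberg R) : A⁻¹.b = -A.b := rfl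
@[simp] lemma inv_c (A : Heisenberg R) : A⁻¹.c = -A.c - A.a * A.b := rfl

instance : Group (Heisenberg R) where
  mul_assoc _ _ _ := by ext <;> simp <;> ring
  one_mul _ := by ext <;> simp
  mul_one _ := by ext <;> simp
  inv_mul_cancel _ := by ext <;> simp; ring

lemma pow_eq (A : Heisenberg R) (N : ℕ) :
    A ^ N = ⟨N * A.a, N * A.b, N * A.c - N.choose 2 * (A.a * A.b)⟩ := by
  induction N with
  | zero => ext <;> simp
  | succ N ih =>
    rw [pow_succ, ih]
    ext <;> simp [Nat.choose_succ_succ] <;> ring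

lemma commutator_eq (A B : Heisenberg R) :
    A⁻¹ * B⁻¹ * A * B = ⟨0, 0, A.a * B.b - A.b * B.a⟩ := by
  ext <;> simp; ring

def proj : Heisenberg R →* Multiplicative (R × R) where
  toFun A := ofAdd (A.a, A.b)
  map_one' := rfl
  map_mul' _ _ := rfl

lemma zpow_a (A : Heisenberg R) (k : ℤ) : (A ^ k).a = k * A.a := by
  change (toAdd (proj (A ^ k))).1 = _
  simp [map_zpow, proj]

lemma zpow_b (A : Heisenberg R) (k : ℤ) : (A ^ k).b = k * A.b := by
  change (toAdd (proj (A ^ k))).2 = _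
  simp [map_zpow, proj]

def center : Multiplicative R →* Heisenberg R where
  toFun w := ⟨0, 0, toAdd w⟩
  map_one' := rfl
  map_mul' _ _ := by ext <;> simp

lemma center_injective : Function.Injective (center : Multiplicative R →* Heisenberg R) :=
  fun _ _ h => congrArg Heisenberg.c h

end Heisenberg

section Lift

variable {G : Type*} [Group G] {x y z : G}

lemma zpow_mul_zpow_swap (hz : z = x⁻¹ * y⁻¹ * x * y) (hzx : Commute z x) (hzy : Commute z y)
    (I J : ℤ) : y ^ J * x ^ I = x ^ I * y ^ J * z ^ (-(I * J)) := by
  have hconj : ∀ I : ℤ, y⁻¹ * x ^ I * y = x ^ I * z ^ I := fun I => by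
    calc y⁻¹ * x ^ I * y = (y⁻¹ * x * y) ^ I := by
          simpa only [inv_inv] using (conj_zpow (a := y⁻¹) (b := x) (i := I)).symm
      _ = (x * z) ^ I := by rw [hz]; group
      _ = x ^ I * z ^ I := hzx.symm.mul_zpow I
  have hconj' : x ^ (-I) * y * x ^ I = y * z ^ (-I) := by
    calc x ^ (-I) * y * x ^ I = y * (x ^ (-I) * (z ^ (-I) * x ^ I)) := by
          rw [← mul_assoc (x ^ (-I)) (z ^ (-I)), ← hconj]; group
      _ = y * z ^ (-I) := by rw [(hzx.zpow_zpow (-I) I).eq]; group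
  have hpow : (x ^ (-I) * y * x ^ I) ^ J = x ^ (-I) * y ^ J * x ^ I := by
    simpa only [zpow_neg, inv_inv] using conj_zpow (a := x ^ (-I)) (b := y) (i := J)
  calc y ^ J * x ^ I = x ^ I * (x ^ (-I) * y * x ^ I) ^ J := by rw [hpow]; group
    _ = x ^ I * y ^ J * z ^ (-(I * J)) := by
      rw [hconj', (hzy.symm.zpow_right (-I)).mul_zpow, ← zpow_mul, mul_assoc, neg_mul]

namespace Heisenberg

def lift (hz : z = x⁻¹ * y⁻¹ * x * y) (hzx : Commute z x) (hzy : Commute z y) :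
    Heisenberg ℤ →* G where
  toFun A := x ^ A.a * y ^ A.b * z ^ A.c
  map_one' := by simp
  map_mul' A B := by
    simp only [mul_a, mul_b, mul_c, mul_assoc]
    rw [(hzx.zpow_zpow A.c B.a).left_comm, (hzy.zpow_zpow A.c B.b).left_comm,
      ← mul_assoc (y ^ A.b), zpow_mul_zpow_swap hz hzx hzy]
    simp only [mul_assoc]
    rw [(hzy.zpow_zpow _ B.b).left_comm, zpow_add, zpow_add,
      show A.c + B.c - A.b * B.a = -(B.a * A.b) + (A.c + B.c) by ring, zpow_add, zpow_add]
    simp only [mul_assoc]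

variable (hz : z = x⁻¹ * y⁻¹ * x * y) (hzx : Commute z x) (hzy : Commute z y)

lemma lift_apply (A : Heisenberg ℤ) : lift hz hzx hzy A = x ^ A.a * y ^ A.b * z ^ A.c := rfl

lemma lift_commutator (A B : Heisenberg ℤ) :
    (lift hz hzx hzy A)⁻¹ * (lift hz hzx hzy B)⁻¹ * lift hz hzx hzy A * lift hz hzx hzy B =
      z ^ (A.a * B.b - A.b * B.a) := by
  rw [← map_inv, ← map_inv, ← map_mul, ← map_mul, ← map_mul, commutator_eq, lift_apply,
    zpow_zero, zpow_zero, one_mul, one_mul]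

end Heisenberg

end Lift

open FreeGroup in
def heisenbergRels (n m : ℕ) : Set (FreeGroup (Fin 2)) :=
  {of 0 ^ n, of 1 ^ n, ((of 0)⁻¹ * (of 1)⁻¹ * of 0 * of 1) ^ m,
    (of 0)⁻¹ * ((of 0)⁻¹ * (of 1)⁻¹ * of 0 * of 1)⁻¹ * of 0 * ((of 0)⁻¹ * (of 1)⁻¹ * of 0 * of 1),
    (of 1)⁻¹ * ((of 0)⁻¹ * (of 1)⁻¹ * of 0 * of 1)⁻¹ * of 1 * ((of 0)⁻¹ * (of 1)⁻¹ * of 0 * of 1)}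

abbrev HeisenbergPresented (n m : ℕ) := PresentedGroup (heisenbergRels n m)

namespace HeisenbergPresented

variable {n m : ℕ}

def x : HeisenbergPresented n m := PresentedGroup.of 0
def y : HeisenbergPresented n m := PresentedGroup.of 1
def z : HeisenbergPresented n m := x⁻¹ * y⁻¹ * x * y

lemma x_pow : (x : HeisenbergPresented n m) ^ n = 1 := by
  rw [x, PresentedGroup.of, ← map_pow]
  exact PresentedGroup.one_of_mem (by simp [heisenbergRels])

lemma y_pow : (y : HeisenbergPresented n m) ^ n = 1 := by
  rw [y, PresentedGroup.of, ← map_pow]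
  exact PresentedGroup.one_of_mem (by simp [heisenbergRels])

lemma z_pow : (z : HeisenbergPresented n m) ^ m = 1 := by
  simp only [z, x, y, PresentedGroup.of, ← map_inv, ← map_mul, ← map_pow]
  exact PresentedGroup.one_of_mem (by simp [heisenbergRels])

lemma commute_z_x : Commute (z : HeisenbergPresented n m) x := by
  refine (inv_mul_inv_mul_mul_eq_one_iff.1 ?_).symm
  simp only [z, x, y, PresentedGroup.of, ← map_inv, ← map_mul]
  exact PresentedGroup.one_of_mem (by simp [heisenbergRels])

lemma commute_z_y : Commute (z : HeisenbergPresented n m) y := by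
  refine (inv_mul_inv_mul_mul_eq_one_iff.1 ?_).symm
  simp only [z, x, y, PresentedGroup.of, ← map_inv, ← map_mul]
  exact PresentedGroup.one_of_mem (by simp [heisenbergRels])

section Lift

variable {H : Type*} [Group H] {X Y : H}

def lift (hX : X ^ n = 1) (hY : Y ^ n = 1) (hZ : (X⁻¹ * Y⁻¹ * X * Y) ^ m = 1)
    (hZX : Commute (X⁻¹ * Y⁻¹ * X * Y) X) (hZY : Commute (X⁻¹ * Y⁻¹ * X * Y) Y) :
    HeisenbergPresented n m →* H :=
  PresentedGroup.toGroup (f := ![X, Y]) <| by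
    rintro w (rfl | rfl | rfl | rfl | rfl) <;>
      simp only [map_mul, map_inv, map_pow, FreeGroup.lift_apply_of, Matrix.cons_val_zero,
        Matrix.cons_val_one]
    exacts [hX, hY, hZ, inv_mul_inv_mul_mul_eq_one_iff.2 hZX.symm,
      inv_mul_inv_mul_mul_eq_one_iff.2 hZY.symm]

variable (hX : X ^ n = 1) (hY : Y ^ n = 1) (hZ : (X⁻¹ * Y⁻¹ * X * Y) ^ m = 1)
  (hZX : Commute (X⁻¹ * Y⁻¹ * X * Y) X) (hZY : Commute (X⁻¹ * Y⁻¹ * X * Y) Y)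

@[simp] lemma lift_x : lift hX hY hZ hZX hZY x = X := PresentedGroup.toGroup.of _

@[simp] lemma lift_y : lift hX hY hZ hZX hZY y = Y := PresentedGroup.toGroup.of _

@[simp] lemma lift_z : lift hX hY hZ hZX hZY z = X⁻¹ * Y⁻¹ * X * Y := by
  simp [z]

end Lift

def ofHeisenberg : Heisenberg ℤ →* HeisenbergPresented n m :=
  Heisenberg.lift rfl commute_z_x commute_z_y

lemma ofHeisenberg_apply (A : Heisenberg ℤ) :
    (ofHeisenberg A : HeisenbergPresented n m) = x ^ A.a * y ^ A.b * z ^ A.c :=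
  rfl

lemma ofHeisenberg_commutator (A B : Heisenberg ℤ) :
    (ofHeisenberg A)⁻¹ * (ofHeisenberg B)⁻¹ * ofHeisenberg A * ofHeisenberg B =
      (z : HeisenbergPresented n m) ^ (A.a * B.b - A.b * B.a) :=
  Heisenberg.lift_commutator _ _ _ A B

lemma ofHeisenberg_pow_eq_one (hn : Odd n) (hmn : m ∣ n) (A : Heisenberg ℤ) :
    (ofHeisenberg A : HeisenbergPresented n m) ^ n = 1 := by
  have hmn' : (m : ℤ) ∣ n := Int.natCast_dvd_natCast.2 hmn
  have hchoose : (n : ℤ) ∣ (n.choose 2 : ℕ) :=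
    Int.natCast_dvd_natCast.2 (Nat.dvd_choose_two_of_odd hn)
  rw [← map_pow, Heisenberg.pow_eq, ofHeisenberg_apply,
    zpow_eq_one_of_pow_eq_one_of_dvd x_pow (dvd_mul_right _ _),
    zpow_eq_one_of_pow_eq_one_of_dvd y_pow (dvd_mul_right _ _),
    zpow_eq_one_of_pow_eq_one_of_dvd z_pow
      (dvd_sub (hmn'.mul_right _) ((hmn'.trans hchoose).mul_right _)), one_mul, one_mul]

def character (u v : ℤ) : HeisenbergPresented n m →* Multiplicative (ZMod n) :=
  lift (X := ofAdd (u : ZMod n)) (Y := ofAdd (v : ZMod n))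
    (by rw [← ofAdd_nsmul, nsmul_eq_mul, ZMod.natCast_self, zero_mul, ofAdd_zero])
    (by rw [← ofAdd_nsmul, nsmul_eq_mul, ZMod.natCast_self, zero_mul, ofAdd_zero])
    (by rw [inv_mul_inv_mul_mul_eq_one_iff.2 (Commute.all _ _), one_pow])
    (Commute.all _ _) (Commute.all _ _)

lemma character_ofHeisenberg (u v : ℤ) (A : Heisenberg ℤ) :
    character u v (ofHeisenberg A : HeisenbergPresented n m) =
      ofAdd ((A.a * u + A.b * v : ℤ) : ZMod n) := by
  simp [character, ofHeisenberg_apply, ← ofAdd_zsmul, ← ofAdd_add, mul_comm]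

lemma orderOf_ofHeisenberg (hn : Odd n) (hmn : m ∣ n) {A : Heisenberg ℤ} {u v : ℤ}
    (h : IsCoprime (n : ℤ) (A.a * u + A.b * v)) :
    orderOf (ofHeisenberg A : HeisenbergPresented n m) = n :=
  orderOf_eq_of_orderOf_map_eq (character u v) (ofHeisenberg_pow_eq_one hn hmn A) <| by
    rw [character_ofHeisenberg, orderOf_ofAdd_eq_addOrderOf, ZMod.addOrderOf_intCast_of_isCoprime h]

def toHeisenbergZMod (hmn : m ∣ n) : HeisenbergPresented n m →* Heisenberg (ZMod m) :=
  lift (X := ⟨1, 0, 0⟩) (Y := ⟨0, 1, 0⟩)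
    (by ext <;> simp [Heisenberg.pow_eq, (ZMod.natCast_eq_zero_iff n m).2 hmn])
    (by ext <;> simp [Heisenberg.pow_eq, (ZMod.natCast_eq_zero_iff n m).2 hmn])
    (by ext <;> simp [Heisenberg.commutator_eq, Heisenberg.pow_eq])
    (by rw [Heisenberg.commutator_eq]; ext <;> simp [add_comm])
    (by rw [Heisenberg.commutator_eq]; ext <;> simp [add_comm])

lemma toHeisenbergZMod_z (hmn : m ∣ n) :
    toHeisenbergZMod hmn (z : HeisenbergPresented n m) = Heisenberg.center (ofAdd 1) := by
  rw [toHeisenbergZMod, lift_z, Heisenberg.commutator_eq]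
  ext <;> simp [Heisenberg.center]

lemma orderOf_z_zpow (hmn : m ∣ n) {d : ℤ} (hd : IsCoprime (m : ℤ) d) :
    orderOf ((z : HeisenbergPresented n m) ^ d) = m := by
  refine orderOf_eq_of_orderOf_map_eq (toHeisenbergZMod hmn) ?_ ?_
  · rw [← zpow_natCast, ← zpow_mul, mul_comm, zpow_mul, zpow_natCast, z_pow, one_zpow]
  · rw [map_zpow, toHeisenbergZMod_z, ← map_zpow, orderOf_injective _ Heisenberg.center_injective,
      ← ofAdd_zsmul, orderOf_ofAdd_eq_addOrderOf, zsmul_one,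
      ZMod.addOrderOf_intCast_of_isCoprime hd]

lemma closure_ofHeisenberg_pair_eq_top (hmn : m ∣ n) {A B : Heisenberg ℤ}
    (h : IsCoprime (n : ℤ) (A.a * B.b - A.b * B.a)) :
    Subgroup.closure {ofHeisenberg A, ofHeisenberg B} =
      (⊤ : Subgroup (HeisenbergPresented n m)) := by
  set H := Subgroup.closure {(ofHeisenberg A : HeisenbergPresented n m), ofHeisenberg B}
  have hA : ofHeisenberg A ∈ H := Subgroup.subset_closure (by simp)
  have hB : ofHeisenberg B ∈ H := Subgroup.subset_closure (by simp)
  have hz : z ∈ H := by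
    refine Subgroup.mem_of_zpow_mem_of_isCoprime z_pow
      (h.of_isCoprime_of_dvd_left (Int.natCast_dvd_natCast.2 hmn)) ?_
    rw [← ofHeisenberg_commutator]
    exact H.mul_mem (H.mul_mem (H.mul_mem (H.inv_mem hA) (H.inv_mem hB)) hA) hB
  have hxy : ∀ k l : ℤ, x ^ (k * A.a + l * B.a) * y ^ (k * A.b + l * B.b) ∈ H := by
    intro k l
    have hmem : ofHeisenberg (A ^ k * B ^ l) * z ^ (-(A ^ k * B ^ l).c) ∈ H := by
      rw [map_mul, map_zpow, map_zpow]
      exact H.mul_mem (H.mul_mem (H.zpow_mem hA k) (H.zpow_mem hB l)) (H.zpow_mem hz _)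
    rwa [ofHeisenberg_apply, mul_assoc, ← zpow_add, add_neg_cancel, zpow_zero, mul_one,
      Heisenberg.mul_a, Heisenberg.mul_b, Heisenberg.zpow_a, Heisenberg.zpow_a, Heisenberg.zpow_b,
      Heisenberg.zpow_b] at hmem
  -- `(k, l) = v • (B.b, -A.b)` and `v • (-B.a, A.a)` hit `(1, 0)` and `(0, 1)` modulo `n`.
  obtain ⟨u, v, huv⟩ := h
  have hx : x ∈ H := by
    have := hxy (v * B.b) (-(v * A.b))
    rwa [show v * B.b * A.a + -(v * A.b) * B.a = 1 + (-u) * n by linear_combination huv,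
      show v * B.b * A.b + -(v * A.b) * B.b = 0 by ring, zpow_add_mul_eq_of_pow_eq_one x_pow,
      zpow_zero, mul_one, zpow_one] at this
  have hy : y ∈ H := by
    have := hxy (-(v * B.a)) (v * A.a)
    rwa [show -(v * B.a) * A.b + v * A.a * B.b = 1 + (-u) * n by linear_combination huv,
      show -(v * B.a) * A.a + v * A.a * B.a = 0 by ring, zpow_add_mul_eq_of_pow_eq_one y_pow,
      zpow_zero, one_mul, zpow_one] at this
  rw [eq_top_iff, ← PresentedGroup.closure_range_of, Subgroup.closure_le, Set.range_subset_iff]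
  exact Fin.forall_fin_two.2 ⟨hx, hy⟩

end HeisenbergPresented

theorem stmt_17_general (p a b : ℕ) (hp : p.Prime) (hodd : Odd p)
    (hba : b ≤ a)
    (rels : Set (FreeGroup (Fin 2)))
    (hrels : rels =
      {FreeGroup.of 0 ^ p ^ a, FreeGroup.of 1 ^ p ^ a,
       ((FreeGroup.of 0)⁻¹ * (FreeGroup.of 1)⁻¹ * FreeGroup.of 0 * FreeGroup.of 1) ^ p ^ b,
       (FreeGroup.of 0)⁻¹ *
         ((FreeGroup.of 0)⁻¹ * (FreeGroup.of 1)⁻¹ * FreeGroup.of 0 * FreeGroup.of 1)⁻¹ *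
         FreeGroup.of 0 *
         ((FreeGroup.of 0)⁻¹ * (FreeGroup.of 1)⁻¹ * FreeGroup.of 0 * FreeGroup.of 1),
       (FreeGroup.of 1)⁻¹ *
         ((FreeGroup.of 0)⁻¹ * (FreeGroup.of 1)⁻¹ * FreeGroup.of 0 * FreeGroup.of 1)⁻¹ *
         FreeGroup.of 1 *
         ((FreeGroup.of 0)⁻¹ * (FreeGroup.of 1)⁻¹ * FreeGroup.of 0 * FreeGroup.of 1)})
    (i j k r s t : ℤ) (hdet : ¬ ((p : ℤ) ∣ (i * s - j * r))) :
    ∀ x y z x₁ y₁ : PresentedGroup rels,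
      x = PresentedGroup.of 0 → y = PresentedGroup.of 1 →
      z = x⁻¹ * y⁻¹ * x * y →
      x₁ = x ^ i * y ^ j * z ^ k → y₁ = x ^ r * y ^ s * z ^ t →
      Subgroup.closure ({x₁, y₁} : Set (PresentedGroup rels)) = ⊤ ∧
        x₁⁻¹ * y₁⁻¹ * x₁ * y₁ = z ^ (i * s - j * r) ∧
        orderOf (x₁⁻¹ * y₁⁻¹ * x₁ * y₁) = p ^ b ∧
        orderOf x₁ = p ^ a ∧ orderOf y₁ = p ^ a := by
  obtain rfl : rels = heisenbergRels (p ^ a) (p ^ b) := hrels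
  rintro _ _ z x₁ y₁ rfl rfl hz hx₁ hy₁
  obtain rfl : z = HeisenbergPresented.z := hz
  obtain rfl : x₁ = HeisenbergPresented.ofHeisenberg ⟨i, j, k⟩ := hx₁
  obtain rfl : y₁ = HeisenbergPresented.ofHeisenberg ⟨r, s, t⟩ := hy₁
  have hmn : p ^ b ∣ p ^ a := pow_dvd_pow p hba
  have hcop (c : ℕ) : IsCoprime ((p ^ c : ℕ) : ℤ) (i * s - j * r) := by
    push_cast
    exact ((Nat.prime_iff_prime_int.mp hp).coprime_iff_not_dvd.mpr hdet).pow_left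
  have hcomm :=
    HeisenbergPresented.ofHeisenberg_commutator (n := p ^ a) (m := p ^ b) ⟨i, j, k⟩ ⟨r, s, t⟩
  refine ⟨HeisenbergPresented.closure_ofHeisenberg_pair_eq_top hmn (hcop a), hcomm, ?_,
    HeisenbergPresented.orderOf_ofHeisenberg hodd.pow hmn (u := s) (v := -r) ?_,
    HeisenbergPresented.orderOf_ofHeisenberg hodd.pow hmn (u := -j) (v := i) ?_⟩
  · exact hcomm ▸ HeisenbergPresented.orderOf_z_zpow hmn (hcop b)
  · convert hcop a using 2; ring
  · convert hcop a using 2; ring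

/-- In the presented group
`G = ⟨x, y ∣ x^(p^a) = y^(p^a) = z^(p^b) = [x,z] = [y,z] = 1, z := [x,y]⟩`
(`p` an odd prime, `1 ≤ b ≤ a`), if `x₁ = x^i y^j z^k`, `y₁ = x^r y^s z^t` with
`is - jr ≢ 0 (mod p)`, then `(x₁, y₁)` generates `G`, `[x₁,y₁] = z^(is-jr)` has
order `p^b`, and `x₁`, `y₁` each have order `p^a`. -/
theorem stmt_17 (p a b : ℕ) (hp : p.Prime) (hodd : Odd p)
    (hb : 1 ≤ b) (hba : b ≤ a)
    (rels : Set (FreeGroup (Fin 2)))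
    (hrels : rels =
      {FreeGroup.of 0 ^ p ^ a, FreeGroup.of 1 ^ p ^ a,
       ((FreeGroup.of 0)⁻¹ * (FreeGroup.of 1)⁻¹ * FreeGroup.of 0 * FreeGroup.of 1) ^ p ^ b,
       (FreeGroup.of 0)⁻¹ *
         ((FreeGroup.of 0)⁻¹ * (FreeGroup.of 1)⁻¹ * FreeGroup.of 0 * FreeGroup.of 1)⁻¹ *
         FreeGroup.of 0 *
         ((FreeGroup.of 0)⁻¹ * (FreeGroup.of 1)⁻¹ * FreeGroup.of 0 * FreeGroup.of 1),
       (FreeGroup.of 1)⁻¹ *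
         ((FreeGroup.of 0)⁻¹ * (FreeGroup.of 1)⁻¹ * FreeGroup.of 0 * FreeGroup.of 1)⁻¹ *
         FreeGroup.of 1 *
         ((FreeGroup.of 0)⁻¹ * (FreeGroup.of 1)⁻¹ * FreeGroup.of 0 * FreeGroup.of 1)})
    (i j k r s t : ℤ) (hdet : ¬ ((p : ℤ) ∣ (i * s - j * r))) :
    ∀ x y z x₁ y₁ : PresentedGroup rels,
      x = PresentedGroup.of 0 → y = PresentedGroup.of 1 →
      z = x⁻¹ * y⁻¹ * x * y →
      x₁ = x ^ i * y ^ j * z ^ k → y₁ = x ^ r * y ^ s * z ^ t →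
      Subgroup.closure ({x₁, y₁} : Set (PresentedGroup rels)) = ⊤ ∧
        x₁⁻¹ * y₁⁻¹ * x₁ * y₁ = z ^ (i * s - j * r) ∧
        orderOf (x₁⁻¹ * y₁⁻¹ * x₁ * y₁) = p ^ b ∧
        orderOf x₁ = p ^ a ∧ orderOf y₁ = p ^ a :=
  stmt_17_general p a b hp hodd hba rels hrels i j k r s t hdet
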